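/- Let Q be a lower transition rate operator on a finite nonempty set 𝒳, and let (T_t)_{t≥0} be the associated family of operators determined by the differential equation d/dt T_t f = Q(T_t f) with T_0 f = f. Then for any t > 0, Q is ergodic if and only if the lower transition operator T_t is regularly absorbing. -/

import Mathlib

open Filter Topology

/-- The minimum of a real-valued function on a finite nonempty type. -/
noncomputable def minf {X : Type*} [Fintype X] [Nonempty X] (f : X → ℝ) : ℝ :=
  Finset.univ.inf' Finset.univ_nonempty f

/-- The maximum of a real-valued function on a finite nonempty type. -/
noncomputable def maxf {X : Type*} [Fintype X] [Nonempty X] (f : X → ℝ) : ℝ :=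
  Finset.univ.sup' Finset.univ_nonempty f

/-- The (real-valued) indicator function of a set. -/
noncomputable def ind {X : Type*} (A : Set X) : X → ℝ := A.indicator 1

/-- The conjugate (upper) operator `f ↦ -(Q (-f))`. -/
def conjOp {X : Type*} (Q : (X → ℝ) → (X → ℝ)) : (X → ℝ) → (X → ℝ) :=
  fun f => -(Q (-f))

/-- A lower transition rate operator. -/
def IsLTRO {X : Type*} [Fintype X] (Q : (X → ℝ) → (X → ℝ)) : Prop :=
  (∀ μ : ℝ, Q (fun _ => μ) = 0) ∧
  (∀ f g : X → ℝ, Q f + Q g ≤ Q (f + g)) ∧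
  (∀ l : ℝ, 0 ≤ l → ∀ f : X → ℝ, Q (l • f) = l • Q f) ∧
  (∀ x y : X, x ≠ y → 0 ≤ Q (ind {y}) x)

/-- A lower transition operator. -/
def IsLTO {X : Type*} [Fintype X] [Nonempty X] (T : (X → ℝ) → (X → ℝ)) : Prop :=
  (∀ f : X → ℝ, ∀ x : X, minf f ≤ T f x) ∧
  (∀ f g : X → ℝ, T f + T g ≤ T (f + g)) ∧
  (∀ l : ℝ, 0 ≤ l → ∀ f : X → ℝ, T (l • f) = l • T f)

/-- `T` is the family of operators solving `d/dt T_t f = Q (T_t f)` on `[0,∞)`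
with `T_0 f = f`. -/
def IsSol {X : Type*} [Fintype X] (Q : (X → ℝ) → (X → ℝ))
    (T : ℝ → (X → ℝ) → (X → ℝ)) : Prop :=
  (∀ f : X → ℝ, T 0 f = f) ∧
  (∀ f : X → ℝ, ∀ t : ℝ, 0 ≤ t →
    HasDerivWithinAt (fun s => T s f) (Q (T t f)) (Set.Ici 0) t)

/-- Ergodicity of a lower transition rate operator, expressed via its
associated time-dependent family `T`. -/
def ErgodicQ {X : Type*} [Fintype X] (T : ℝ → (X → ℝ) → (X → ℝ)) : Prop :=
  ∀ f : X → ℝ, ∃ c : ℝ, Tendsto (fun t => T t f) atTop (𝓝 (fun _ : X => c))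

/-- Ergodicity of a lower transition operator. -/
def ErgodicT {X : Type*} [Fintype X] (T : (X → ℝ) → (X → ℝ)) : Prop :=
  ∀ f : X → ℝ, ∃ c : ℝ, Tendsto (fun n : ℕ => T^[n] f) atTop (𝓝 (fun _ : X => c))

/-- `x` is upper reachable from `y` (w.r.t. the lower transition rate operator `Q`). -/
def upperReach {X : Type*} [Fintype X] (Q : (X → ℝ) → (X → ℝ)) (y x : X) : Prop :=
  ∃ (n : ℕ) (p : ℕ → X), p 0 = y ∧ p n = x ∧
    ∀ k : ℕ, k < n → p (k + 1) ≠ p k ∧ 0 < conjOp Q (ind {p (k + 1)}) (p k)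

/-- One step of the lower-reachability construction: `A ↦ A ∪ {y ∉ A : Q(𝟙_A)(y) > 0}`. -/
def lowerStep {X : Type*} [Fintype X] (Q : (X → ℝ) → (X → ℝ)) (A : Set X) : Set X :=
  A ∪ {y : X | y ∉ A ∧ 0 < Q (ind A) y}

/-- `A` is lower reachable from `x`: `x ∈ Aₙ` where `n` is the first index with
`Aₙ = Aₙ₊₁` (equivalently, any such index, since the sequence is determined by
recursion and increasing). -/
def lowerReach {X : Type*} [Fintype X] (Q : (X → ℝ) → (X → ℝ)) (x : X) (A : Set X) : Prop :=
  ∃ n : ℕ, (lowerStep Q)^[n] A = (lowerStep Q)^[n + 1] A ∧ x ∈ (lowerStep Q)^[n] A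

/-- The set `𝒳_RA := {x : ∃ n ≥ 1, min T̄ⁿ 𝟙ₓ > 0}`. -/
noncomputable def XRA {X : Type*} [Fintype X] [Nonempty X]
    (T : (X → ℝ) → (X → ℝ)) : Set X :=
  {x : X | ∃ n : ℕ, 0 < minf ((conjOp T)^[n + 1] (ind {x}))}

/-- A regularly absorbing lower transition operator. -/
def RegAbs {X : Type*} [Fintype X] [Nonempty X] (T : (X → ℝ) → (X → ℝ)) : Prop :=
  (XRA T).Nonempty ∧ ∀ x : X, x ∉ XRA T → ∃ n : ℕ, 0 < T^[n + 1] (ind (XRA T)) x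

/-- The set `𝒳_1A := {x : min T̄ 𝟙ₓ > 0}`. -/
noncomputable def X1A {X : Type*} [Fintype X] [Nonempty X]
    (T : (X → ℝ) → (X → ℝ)) : Set X :=
  {x : X | 0 < minf (conjOp T (ind {x}))}

/-- A 1-step absorbing lower transition operator. -/
def OneStepAbs {X : Type*} [Fintype X] [Nonempty X] (T : (X → ℝ) → (X → ℝ)) : Prop :=
  (X1A T).Nonempty ∧ ∀ x : X, x ∉ X1A T → 0 < T (ind (X1A T)) x

/-- The operator (sup) norm of a non-negatively homogeneous operator. -/
noncomputable def opN {X : Type*} [Fintype X] (Q : (X → ℝ) → (X → ℝ)) : ℝ :=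
  sSup {r : ℝ | ∃ f : X → ℝ, ‖f‖ = 1 ∧ r = ‖Q f‖}

/-!
Superadditivity and nonnegative homogeneity make `Q` Lipschitz, so the solution `T` is unique;
uniqueness gives the semigroup law and homogeneity of each `T s`. At a coordinate where a function
is minimal `Q` is nonnegative, so a Dini-derivative argument shows that the minimum of `T s f`
and of `T s (f + g) - T s f - T s g` cannot decrease: each `T s` is a lower transition operator,
and since `T s` is a contraction fixing constants, `T s f` converges iff the samples `T (n t) f` do.

For a lower transition operator `S` with conjugate `S̄`, the numbers `min S̄ⁿ g` increase to `m` and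
`max S̄ⁿ g` decrease to `M`. If `z ∈ 𝒳_RA`, with `min S̄ᴺ 𝟙_z = ε > 0`, then `N` further steps raise
the minimum by `ε (S̄ⁿ g z - min S̄ⁿ g)`, so `S̄ⁿ g z → m`. If `z ∉ 𝒳_RA` and
`Sᵖ 𝟙_{𝒳_RA} z = δ > 0`, then `S̄ⁿ⁺ᵖ g z` eventually drops below any bound above `M - δ (M - m)`.
Since the maximum `M` is approached at some fixed coordinate, this forces `M = m`. Conversely, ergodicity forces
`S̄ⁿ 𝟙_x → 0` for `x ∉ 𝒳_RA`, hence `Sⁿ 𝟙_{𝒳_RA} = 1 - S̄ⁿ 𝟙_{𝒳_RAᶜ} → 1`.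
-/

open Set

section MinMax

variable {X : Type*} [Fintype X] [Nonempty X]

lemma minf_le_apply (f : X → ℝ) (x : X) : minf f ≤ f x :=
  Finset.inf'_le _ (Finset.mem_univ x)

lemma le_minf {f : X → ℝ} {c : ℝ} (h : ∀ x, c ≤ f x) : c ≤ minf f :=
  Finset.le_inf' _ _ fun x _ => h x

lemma exists_apply_eq_minf (f : X → ℝ) : ∃ x, f x = minf f := by
  obtain ⟨x, -, hx⟩ := Finset.exists_mem_eq_inf' Finset.univ_nonempty f
  exact ⟨x, hx.symm⟩

lemma le_maxf_apply (f : X → ℝ) (x : X) : f x ≤ maxf f :=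
  Finset.le_sup' _ (Finset.mem_univ x)

lemma maxf_le {f : X → ℝ} {c : ℝ} (h : ∀ x, f x ≤ c) : maxf f ≤ c :=
  Finset.sup'_le _ _ fun x _ => h x

lemma minf_le_maxf (f : X → ℝ) : minf f ≤ maxf f :=
  (minf_le_apply f (Classical.arbitrary X)).trans (le_maxf_apply f _)

lemma exists_apply_eq_maxf (f : X → ℝ) : ∃ x, f x = maxf f := by
  obtain ⟨x, -, hx⟩ := Finset.exists_mem_eq_sup' Finset.univ_nonempty f
  exact ⟨x, hx.symm⟩

lemma minf_const (c : ℝ) : minf (fun _ : X => c) = c :=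
  Finset.inf'_const _ c

lemma continuous_minf : Continuous (minf : (X → ℝ) → ℝ) :=
  Continuous.finset_inf'_apply _ fun x _ => continuous_apply x

lemma neg_dist_le_minf_sub (f g : X → ℝ) : -dist f g ≤ minf (f - g) := by
  obtain ⟨x, hx⟩ := exists_apply_eq_minf (f - g)
  have := dist_le_pi_dist f g x
  rw [Real.dist_eq] at this
  rw [← hx, Pi.sub_apply]
  linarith [neg_abs_le (f x - g x)]

lemma exists_le_of_le_maxf {h : ℕ → X → ℝ} {M : ℝ} (hM : ∀ n, M ≤ maxf (h n)) {L : X → ℝ}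
    (hL : ∀ x c, L x < c → ∀ᶠ n in atTop, h n x < c) : ∃ x, M ≤ L x := by
  by_contra! hlt
  obtain ⟨n, hn⟩ := (eventually_all.2 fun x => hL x M (hlt x)).exists
  obtain ⟨x, hx⟩ := exists_apply_eq_maxf (h n)
  linarith [hM n, hn x]

end MinMax

section Indicator

variable {X : Type*}

lemma ind_nonneg (A : Set X) (x : X) : 0 ≤ ind A x :=
  Set.indicator_nonneg (fun _ _ => zero_le_one) x

lemma sum_smul_ind_singleton [Fintype X] (f : X → ℝ) : ∑ y, f y • ind {y} = f := by
  classical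
  funext x
  simp [ind, Pi.single_apply, Finset.sum_apply]

lemma ind_compl (A : Set X) : ind Aᶜ = (fun _ => 1) - ind A := by
  funext x
  by_cases hx : x ∈ A <;> simp [ind, hx]

end Indicator

structure IsSuperlinear {X : Type*} (Q : (X → ℝ) → (X → ℝ)) : Prop where
  add_le : ∀ f g : X → ℝ, Q f + Q g ≤ Q (f + g)
  map_smul : ∀ l : ℝ, 0 ≤ l → ∀ f : X → ℝ, Q (l • f) = l • Q f

namespace IsSuperlinear

variable {X : Type*} {Q : (X → ℝ) → (X → ℝ)}

lemma map_zero (hQ : IsSuperlinear Q) : Q 0 = 0 := by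
  simpa using hQ.map_smul 0 le_rfl 0

lemma sum_le {ι : Type*} (hQ : IsSuperlinear Q) (s : Finset ι) (F : ι → X → ℝ) :
    ∑ i ∈ s, Q (F i) ≤ Q (∑ i ∈ s, F i) := by
  classical
  induction s using Finset.induction_on with
  | empty => simp [hQ.map_zero]
  | insert i s hi ih =>
    rw [Finset.sum_insert hi, Finset.sum_insert hi]
    exact (add_le_add_right ih _).trans (hQ.add_le _ _)

lemma sum_smul_le {ι : Type*} (hQ : IsSuperlinear Q) (s : Finset ι) {c : ι → ℝ}
    (hc : ∀ i, 0 ≤ c i) (F : ι → X → ℝ) :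
    ∑ i ∈ s, c i • Q (F i) ≤ Q (∑ i ∈ s, c i • F i) := by
  simpa only [hQ.map_smul _ (hc _)] using hQ.sum_le s fun i => c i • F i

lemma exists_neg_mul_norm_le [Fintype X] (hQ : IsSuperlinear Q) :
    ∃ C, 0 ≤ C ∧ ∀ h x, -(C * ‖h‖) ≤ Q h x := by
  refine ⟨∑ y : X, (‖Q (ind {y})‖ + ‖Q (-ind {y})‖), by positivity, fun h x => ?_⟩
  -- split `h` into nonnegative multiples of `±𝟙_y`, on which homogeneity applies
  have hsplit : ∀ y, (h y)⁺ • ind {y} + (h y)⁻ • -ind {y} = h y • ind {y} := fun y => by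
    rw [smul_neg, ← sub_eq_add_neg, ← sub_smul, posPart_sub_negPart]
  have hdecomp : ∑ y, ((h y)⁺ • ind {y} + (h y)⁻ • -ind {y}) = h := by
    simp only [hsplit, sum_smul_ind_singleton]
  have hterm : ∀ y, -(‖h‖ * (‖Q (ind {y})‖ + ‖Q (-ind {y})‖))
      ≤ Q ((h y)⁺ • ind {y} + (h y)⁻ • -ind {y}) x := fun y => by
    have hle := hQ.add_le ((h y)⁺ • ind {y}) ((h y)⁻ • -ind {y}) x
    rw [Pi.add_apply, hQ.map_smul _ (posPart_nonneg _), hQ.map_smul _ (negPart_nonneg _),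
      Pi.smul_apply, Pi.smul_apply, smul_eq_mul, smul_eq_mul] at hle
    have hpos : (h y)⁺ ≤ ‖h‖ :=
      sup_le ((le_abs_self _).trans (norm_le_pi_norm h y)) (norm_nonneg h)
    have hneg : (h y)⁻ ≤ ‖h‖ :=
      sup_le ((neg_le_abs _).trans (norm_le_pi_norm h y)) (norm_nonneg h)
    have h1 : -‖Q (ind {y})‖ ≤ Q (ind {y}) x :=
      neg_le_of_abs_le (norm_le_pi_norm (Q (ind {y})) x)
    have h2 : -‖Q (-ind {y})‖ ≤ Q (-ind {y}) x :=
      neg_le_of_abs_le (norm_le_pi_norm (Q (-ind {y})) x)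
    nlinarith [posPart_nonneg (h y), negPart_nonneg (h y), norm_nonneg (Q (ind {y})),
      norm_nonneg (Q (-ind {y}))]
  calc -((∑ y : X, (‖Q (ind {y})‖ + ‖Q (-ind {y})‖)) * ‖h‖)
      = ∑ y, -(‖h‖ * (‖Q (ind {y})‖ + ‖Q (-ind {y})‖)) := by
        rw [Finset.sum_mul, ← Finset.sum_neg_distrib]; simp only [mul_comm]
    _ ≤ ∑ y, Q ((h y)⁺ • ind {y} + (h y)⁻ • -ind {y}) x := Finset.sum_le_sum fun y _ => hterm y
    _ ≤ Q h x := by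
        rw [← Finset.sum_apply]
        conv_rhs => rw [← hdecomp]
        exact hQ.sum_le _ _ x

lemma exists_lipschitzWith [Fintype X] (hQ : IsSuperlinear Q) : ∃ K, LipschitzWith K Q := by
  obtain ⟨C, hC, hbound⟩ := hQ.exists_neg_mul_norm_le
  have hsub : ∀ f g x, Q g x - Q f x ≤ C * ‖f - g‖ := fun f g x => by
    have hadd := hQ.add_le (f - g) g x
    rw [sub_add_cancel, Pi.add_apply] at hadd
    linarith [hbound (f - g) x]
  refine ⟨C.toNNReal, LipschitzWith.of_dist_le_mul fun f g => ?_⟩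
  rw [Real.coe_toNNReal _ hC, dist_eq_norm, dist_eq_norm]
  refine (pi_norm_le_iff_of_nonneg (by positivity)).2 fun x => ?_
  rw [Real.norm_eq_abs, Pi.sub_apply, abs_le]
  have hsub' := hsub g f x
  rw [norm_sub_rev] at hsub'
  constructor <;> linarith [hsub f g x]

end IsSuperlinear

namespace IsLTRO

variable {X : Type*} [Fintype X] {Q : (X → ℝ) → (X → ℝ)}

lemma isSuperlinear (hQ : IsLTRO Q) : IsSuperlinear Q :=
  ⟨hQ.2.1, hQ.2.2.1⟩

lemma map_add_const (hQ : IsLTRO Q) (f : X → ℝ) (c : ℝ) : Q (f + fun _ => c) = Q f := by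
  apply le_antisymm
  · have hcancel : (f + fun _ => c) + (fun _ => -c) = f := by
      funext x; simp
    have h := hQ.2.1 (f + fun _ => c) (fun _ => -c)
    rwa [hQ.1, add_zero, hcancel] at h
  · have h := hQ.2.1 f (fun _ => c)
    rwa [hQ.1, add_zero] at h

lemma nonneg_apply_of_apply_eq_minf [Nonempty X] (hQ : IsLTRO Q) {h : X → ℝ} {x : X}
    (hx : h x = minf h) : 0 ≤ Q h x := by
  set w : X → ℝ := h - fun _ => minf h
  have hw : ∀ y, 0 ≤ w y := fun y => sub_nonneg.2 (minf_le_apply h y)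
  have hQw : Q h = Q w := by
    rw [← hQ.map_add_const w (minf h), sub_add_cancel]
  have hsum := hQ.isSuperlinear.sum_smul_le Finset.univ hw (fun y => ind {y}) x
  rw [sum_smul_ind_singleton, Finset.sum_apply] at hsum
  rw [hQw]
  refine le_trans (Finset.sum_nonneg fun y _ => ?_) hsum
  rw [Pi.smul_apply, smul_eq_mul]
  rcases eq_or_ne y x with rfl | hyx
  · simp [w, hx]
  · exact mul_nonneg (hw y) (hQ.2.2.2 x y hyx.symm)

end IsLTRO

section Dini

variable {X : Type*} [Fintype X] [Nonempty X]

lemma eventually_neg_minf_lt {u : ℝ → X → ℝ} {v : X → ℝ} {s r : ℝ}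
    (hu : HasDerivWithinAt u v (Ici s) s) (hv : ∀ x, u s x = minf (u s) → 0 ≤ v x)
    (hr : 0 < r) : ∀ᶠ z in 𝓝[>] s, -minf (u z) < -minf (u s) + r * (z - s) := by
  have hcoord : ∀ x, ∀ᶠ z in 𝓝[>] s, -u z x < -minf (u s) + r * (z - s) := by
    intro x
    have hux : HasDerivWithinAt (fun z => -u z x) (-v x) (Ici s) s :=
      (hasDerivWithinAt_pi.1 hu x).neg
    rcases (minf_le_apply (u s) x).eq_or_lt with hmin | hmin
    · have hslope := hux.Ioi_of_Ici.limsup_slope_le' (lt_irrefl s)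
        (show -v x < r by linarith [hv x hmin.symm])
      filter_upwards [hslope, self_mem_nhdsWithin] with z hz hzs
      rw [slope_def_field, div_lt_iff₀ (sub_pos.2 hzs)] at hz
      linarith
    · have hcont : Tendsto (fun z => u z x) (𝓝[>] s) (𝓝 (u s x)) :=
        ((hasDerivWithinAt_pi.1 hu x).continuousWithinAt.mono Ioi_subset_Ici_self).tendsto
      filter_upwards [hcont.eventually (lt_mem_nhds hmin), self_mem_nhdsWithin] with z hz hzs
      nlinarith [mem_Ioi.1 hzs]
  filter_upwards [eventually_all.2 hcoord] with z hz
  obtain ⟨x, hx⟩ := exists_apply_eq_minf (u z)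
  rw [← hx]
  exact hz x

lemma minf_le_minf_of_hasDerivWithinAt {u v : ℝ → X → ℝ} {a b : ℝ} (hab : a ≤ b)
    (hu : ContinuousOn u (Icc a b)) (hu' : ∀ s ∈ Ico a b, HasDerivWithinAt u (v s) (Ici s) s)
    (hv : ∀ s ∈ Ico a b, ∀ x, u s x = minf (u s) → 0 ≤ v s x) :
    minf (u a) ≤ minf (u b) := by
  have key := image_le_of_liminf_slope_right_le_deriv_boundary
    (f := fun s => -minf (u s)) (B := fun _ => -minf (u a)) (B' := fun _ => 0)
    (continuous_minf.comp_continuousOn hu).neg le_rfl continuousOn_const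
    (fun s _ => hasDerivWithinAt_const s _ _)
    (fun s hs r hr => by
      refine Eventually.frequently ?_
      filter_upwards [eventually_neg_minf_lt (hu' s hs) (hv s hs) hr, self_mem_nhdsWithin]
        with z hz hzs
      rw [slope_def_field, div_lt_iff₀ (sub_pos.2 hzs)]
      linarith)
    (right_mem_Icc.2 hab)
  simpa using key

end Dini

namespace IsSol

variable {X : Type*} [Fintype X] {Q : (X → ℝ) → (X → ℝ)} {T : ℝ → (X → ℝ) → (X → ℝ)}

lemma continuousOn (hT : IsSol Q T) (f : X → ℝ) : ContinuousOn (fun s => T s f) (Ici 0) :=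
  fun s hs => (hT.2 f s hs).continuousWithinAt

lemma hasDerivWithinAt_Ici (hT : IsSol Q T) (f : X → ℝ) {s : ℝ} (hs : 0 ≤ s) :
    HasDerivWithinAt (fun r => T r f) (Q (T s f)) (Ici s) s :=
  (hT.2 f s hs).mono (Ici_subset_Ici.2 hs)

lemma eq_of_hasDerivWithinAt (hQ : IsLTRO Q) (hT : IsSol Q T) {f : X → ℝ} {g : ℝ → X → ℝ}
    (hg0 : g 0 = f) (hg : ∀ s, 0 ≤ s → HasDerivWithinAt g (Q (g s)) (Ici 0) s)
    {s : ℝ} (hs : 0 ≤ s) : T s f = g s := by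
  obtain ⟨K, hK⟩ := hQ.isSuperlinear.exists_lipschitzWith
  exact ODE_solution_unique (v := fun _ => Q) (fun _ => hK)
    ((hT.continuousOn f).mono Icc_subset_Ici_self) (fun r hr => hT.hasDerivWithinAt_Ici f hr.1)
    (fun r hr => (hg r hr.1).continuousWithinAt.mono Icc_subset_Ici_self)
    (fun r hr => (hg r hr.1).mono (Ici_subset_Ici.2 hr.1)) (by rw [hT.1, hg0])
    (right_mem_Icc.2 hs)

lemma map_smul (hQ : IsLTRO Q) (hT : IsSol Q T) {l : ℝ} (hl : 0 ≤ l) (f : X → ℝ) {s : ℝ}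
    (hs : 0 ≤ s) : T s (l • f) = l • T s f :=
  hT.eq_of_hasDerivWithinAt hQ (g := fun r => l • T r f) (by simp only [hT.1]) (fun r hr => by
    rw [hQ.2.2.1 l hl]
    exact (hT.2 f r hr).const_smul l) hs

lemma apply_apply (hQ : IsLTRO Q) (hT : IsSol Q T) (f : X → ℝ) {s r : ℝ} (hs : 0 ≤ s)
    (hr : 0 ≤ r) : T s (T r f) = T (s + r) f :=
  hT.eq_of_hasDerivWithinAt hQ (g := fun w => T (w + r) f) (by rw [zero_add])
    (fun w hw => by
      have hshift : HasDerivWithinAt (fun z : ℝ => z + r) 1 (Ici 0) w :=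
        (hasDerivWithinAt_id w _).add_const r
      have hcomp := (hT.2 f (w + r) (by positivity)).scomp w hshift
        fun z (hz : 0 ≤ z) => show 0 ≤ z + r by positivity
      rwa [one_smul] at hcomp) hs

lemma iterate_apply (hQ : IsLTRO Q) (hT : IsSol Q T) (f : X → ℝ) {t : ℝ} (ht : 0 ≤ t)
    (n : ℕ) : (T t)^[n] f = T (n * t) f := by
  induction n with
  | zero => simp [hT.1]
  | succ n ih =>
    rw [Function.iterate_succ_apply', ih, hT.apply_apply hQ f ht (by positivity)]
    push_cast
    ring_nf

variable [Nonempty X]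

lemma minf_le_apply (hQ : IsLTRO Q) (hT : IsSol Q T) (f : X → ℝ) {s : ℝ} (hs : 0 ≤ s)
    (x : X) : minf f ≤ T s f x := by
  have hmono := minf_le_minf_of_hasDerivWithinAt hs ((hT.continuousOn f).mono Icc_subset_Ici_self)
    (fun r hr => hT.hasDerivWithinAt_Ici f hr.1)
    (fun r _ x hx => hQ.nonneg_apply_of_apply_eq_minf hx)
  rw [hT.1] at hmono
  exact hmono.trans (_root_.minf_le_apply _ x)

lemma add_le (hQ : IsLTRO Q) (hT : IsSol Q T) (f g : X → ℝ) {s : ℝ} (hs : 0 ≤ s) :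
    T s f + T s g ≤ T s (f + g) := by
  set u : ℝ → X → ℝ := fun r => T r (f + g) - (T r f + T r g)
  have hcont : ∀ h, ContinuousOn (fun r => T r h) (Icc 0 s) :=
    fun h => (hT.continuousOn h).mono Icc_subset_Ici_self
  -- at a minimising coordinate of `u`, superadditivity of `Q` gives `u' ≥ Q u ≥ 0`
  have hmono := minf_le_minf_of_hasDerivWithinAt (u := u)
    (v := fun r => Q (T r (f + g)) - (Q (T r f) + Q (T r g))) hs
    ((hcont _).sub ((hcont f).add (hcont g)))
    (fun r hr => (hT.hasDerivWithinAt_Ici _ hr.1).sub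
      ((hT.hasDerivWithinAt_Ici f hr.1).add (hT.hasDerivWithinAt_Ici g hr.1)))
    (fun r _ x hx => by
      have h1 := hQ.2.1 (T r f + T r g) (u r) x
      have h2 := hQ.2.1 (T r f) (T r g) x
      have h3 := hQ.nonneg_apply_of_apply_eq_minf hx
      simp only [u, add_sub_cancel, Pi.add_apply] at h1 h2
      simp only [Pi.sub_apply, Pi.add_apply]
      linarith)
  have hu0 : u 0 = 0 := by simp [u, hT.1]
  rw [hu0, show (0 : X → ℝ) = fun _ => 0 from rfl, minf_const] at hmono
  intro x
  have := hmono.trans (_root_.minf_le_apply (u s) x)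
  simp only [u, Pi.sub_apply, Pi.add_apply] at this
  simp only [Pi.add_apply]
  linarith

lemma isLTO (hQ : IsLTRO Q) (hT : IsSol Q T) {s : ℝ} (hs : 0 ≤ s) : IsLTO (T s) :=
  ⟨fun f x => hT.minf_le_apply hQ f hs x, fun f g => hT.add_le hQ f g hs,
    fun _ hl f => hT.map_smul hQ hl f hs⟩

end IsSol

section ConjOp

variable {X : Type*} (S : (X → ℝ) → (X → ℝ))

lemma conjOp_conjOp : conjOp (conjOp S) = S := by
  funext f
  simp [conjOp]

lemma conjOp_neg (f : X → ℝ) : conjOp S (-f) = -S f := by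
  simp [conjOp]

lemma conjOp_iterate (n : ℕ) : (conjOp S)^[n] = conjOp (S^[n]) := by
  induction n with
  | zero => funext f; simp [conjOp]
  | succ n ih =>
    funext f
    rw [Function.iterate_succ', ih, Function.iterate_succ']
    simp [conjOp]

end ConjOp

namespace IsLTO

variable {X : Type*} [Fintype X] [Nonempty X] {S : (X → ℝ) → (X → ℝ)}

lemma isSuperlinear (hS : IsLTO S) : IsSuperlinear S :=
  ⟨hS.2.1, hS.2.2⟩

lemma map_zero (hS : IsLTO S) : S 0 = 0 :=
  hS.isSuperlinear.map_zero

lemma mono (hS : IsLTO S) {f g : X → ℝ} (hfg : f ≤ g) : S f ≤ S g := fun x => by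
  have hadd := hS.2.1 f (g - f) x
  have hpos : 0 ≤ S (g - f) x := (le_minf fun y => sub_nonneg.2 (hfg y)).trans (hS.1 _ x)
  rw [add_sub_cancel, Pi.add_apply] at hadd
  linarith

lemma le_conjOp (hS : IsLTO S) (f : X → ℝ) : S f ≤ conjOp S f := fun x => by
  have hadd := hS.2.1 f (-f) x
  rw [add_neg_cancel, hS.map_zero] at hadd
  simp only [conjOp, Pi.neg_apply, Pi.add_apply, Pi.zero_apply] at hadd ⊢
  linarith

lemma map_add_const (hS : IsLTO S) (f : X → ℝ) (c : ℝ) :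
    S (f + fun _ => c) = S f + fun _ => c := by
  have hconst : ∀ c x, c ≤ S (fun _ : X => c) x := fun c x => by
    simpa only [minf_const] using hS.1 (fun _ => c) x
  funext x
  apply le_antisymm
  · have hadd := hS.2.1 (f + fun _ => c) (fun _ => -c) x
    have hcancel : (f + fun _ => c) + (fun _ => -c) = f := by
      funext y; simp
    rw [hcancel, Pi.add_apply] at hadd
    simp only [Pi.add_apply]
    linarith [hconst (-c) x]
  · simpa using (add_le_add_right (hconst c x) _).trans (hS.2.1 f (fun _ => c) x)

lemma map_const (hS : IsLTO S) (c : ℝ) : S (fun _ => c) = fun _ => c := by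
  simpa [hS.map_zero] using hS.map_add_const 0 c

lemma comp {S' : (X → ℝ) → (X → ℝ)} (hS : IsLTO S) (hS' : IsLTO S') : IsLTO (S ∘ S') :=
  ⟨fun f x => (le_minf fun y => hS'.1 f y).trans (hS.1 _ x),
    fun f g => (hS.2.1 _ _).trans (hS.mono (hS'.2.1 f g)),
    fun l hl f => by simp only [Function.comp_apply, hS'.2.2 l hl, hS.2.2 l hl]⟩

lemma iterate (hS : IsLTO S) (n : ℕ) : IsLTO S^[n] := by
  induction n with
  | zero => exact ⟨fun f x => minf_le_apply f x, fun _ _ => le_rfl, fun _ _ _ => rfl⟩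
  | succ n ih => rw [Function.iterate_succ']; exact hS.comp ih

lemma dist_le (hS : IsLTO S) (f g : X → ℝ) : dist (S f) (S g) ≤ dist f g := by
  have hsub : ∀ f g x, S g x - S f x ≤ dist f g := fun f g x => by
    have hadd := hS.2.1 (f - g) g x
    rw [sub_add_cancel, Pi.add_apply] at hadd
    linarith [(neg_dist_le_minf_sub f g).trans (hS.1 (f - g) x)]
  refine (dist_pi_le_iff dist_nonneg).2 fun x => ?_
  rw [Real.dist_eq, abs_le]
  constructor <;> linarith [hsub f g x, hsub g f x, dist_comm f g]

lemma minf_le_conjOp (hS : IsLTO S) (f : X → ℝ) (x : X) : minf f ≤ conjOp S f x :=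
  (hS.1 f x).trans (hS.le_conjOp f x)

lemma conjOp_le_maxf (hS : IsLTO S) (f : X → ℝ) (x : X) : conjOp S f x ≤ maxf f := by
  have h := (le_minf fun y => neg_le_neg (le_maxf_apply f y)).trans (hS.1 (-f) x)
  simp only [conjOp, Pi.neg_apply]
  linarith

lemma conjOp_mono (hS : IsLTO S) {f g : X → ℝ} (hfg : f ≤ g) : conjOp S f ≤ conjOp S g :=
  neg_le_neg (hS.mono (neg_le_neg hfg))

lemma conjOp_add_const (hS : IsLTO S) (f : X → ℝ) (c : ℝ) :
    conjOp S (f + fun _ => c) = conjOp S f + fun _ => c := by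
  have hneg : -(f + fun _ => c) = -f + fun _ => -c := by
    funext y; simp [add_comm]
  simp only [conjOp, hneg, hS.map_add_const]
  funext y; simp [add_comm]

lemma conjOp_smul (hS : IsLTO S) {l : ℝ} (hl : 0 ≤ l) (f : X → ℝ) :
    conjOp S (l • f) = l • conjOp S f := by
  simp only [conjOp, ← smul_neg, hS.2.2 l hl]

lemma conjOp_const_sub_smul (hS : IsLTO S) (b : ℝ) {d : ℝ} (hd : 0 ≤ d) (f : X → ℝ) :
    conjOp S ((fun _ => b) - d • f) = (fun _ => b) - d • S f := by
  rw [sub_eq_neg_add, ← smul_neg, hS.conjOp_add_const, hS.conjOp_smul hd, conjOp_neg,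
    smul_neg, neg_add_eq_sub]

lemma conjOp_sum_smul_le (hS : IsLTO S) {c : X → ℝ} (hc : ∀ y, 0 ≤ c y) (F : X → X → ℝ) :
    conjOp S (∑ y, c y • F y) ≤ ∑ y, c y • conjOp S (F y) := by
  have h := hS.isSuperlinear.sum_smul_le Finset.univ hc fun y => -F y
  simp only [smul_neg, Finset.sum_neg_distrib] at h
  simp only [conjOp, smul_neg, Finset.sum_neg_distrib]
  exact neg_le_neg h

end IsLTO

section Ergodic

variable {X : Type*} [Fintype X] {S : (X → ℝ) → (X → ℝ)}

lemma ergodicT_conjOp (h : ErgodicT S) : ErgodicT (conjOp S) := by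
  intro f
  obtain ⟨c, hc⟩ := h (-f)
  refine ⟨-c, ?_⟩
  simp only [conjOp_iterate, conjOp]
  exact hc.neg

lemma ergodicT_conjOp_iff : ErgodicT (conjOp S) ↔ ErgodicT S :=
  ⟨fun h => conjOp_conjOp S ▸ ergodicT_conjOp h, ergodicT_conjOp⟩

end Ergodic

namespace IsLTO

variable {X : Type*} [Fintype X] [Nonempty X] {S : (X → ℝ) → (X → ℝ)}

lemma tendsto_conjOp_iterate_ind_of_notMem_XRA (hS : IsLTO S) (herg : ErgodicT S) {x : X}
    (hx : x ∉ XRA S) : Tendsto (fun n => (conjOp S)^[n] (ind {x})) atTop (𝓝 0) := by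
  obtain ⟨c, hc⟩ := ergodicT_conjOp herg (ind {x})
  have hmin : ∀ n, minf ((conjOp S)^[n + 1] (ind {x})) = 0 := fun n => by
    refine le_antisymm (not_lt.1 fun hpos => hx ⟨n, hpos⟩) (le_minf fun y => ?_)
    rw [conjOp_iterate]
    exact (le_minf (ind_nonneg _)).trans ((hS.iterate _).minf_le_conjOp _ y)
  have hlim := ((continuous_minf.tendsto _).comp hc).comp (tendsto_add_atTop_nat 1)
  simp only [Function.comp_def, hmin, minf_const] at hlim
  rw [tendsto_nhds_unique hlim tendsto_const_nhds] at hc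
  exact hc

lemma tendsto_iterate_ind_XRA (hS : IsLTO S) (herg : ErgodicT S) (y : X) :
    Tendsto (fun n => S^[n] (ind (XRA S)) y) atTop (𝓝 1) := by
  set A := XRA S
  have hdual : ∀ n, S^[n] (ind A) y = 1 - (conjOp S)^[n] (ind Aᶜ) y := fun n => by
    rw [ind_compl, ← one_smul ℝ (ind A), conjOp_iterate,
      (hS.iterate n).conjOp_const_sub_smul 1 zero_le_one]
    simp
  have hle : ∀ n, (conjOp S)^[n] (ind Aᶜ) y ≤ ∑ x, ind Aᶜ x * (conjOp S)^[n] (ind {x}) y :=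
    fun n => by
      have h := (hS.iterate n).conjOp_sum_smul_le (ind_nonneg Aᶜ) (fun x => ind {x}) y
      rw [sum_smul_ind_singleton, Finset.sum_apply] at h
      simpa only [conjOp_iterate, Pi.smul_apply, smul_eq_mul] using h
  have hnonneg : ∀ n, 0 ≤ (conjOp S)^[n] (ind Aᶜ) y := fun n => by
    rw [conjOp_iterate]
    exact (le_minf (ind_nonneg _)).trans ((hS.iterate n).minf_le_conjOp _ y)
  have hsum : Tendsto (fun n => ∑ x, ind Aᶜ x * (conjOp S)^[n] (ind {x}) y) atTop (𝓝 0) := by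
    rw [show (0 : ℝ) = ∑ x : X, ind Aᶜ x * 0 by simp]
    refine tendsto_finsetSum _ fun x _ => ?_
    by_cases hx : x ∈ A
    · simp [ind, hx]
    · exact ((tendsto_pi_nhds.1 (hS.tendsto_conjOp_iterate_ind_of_notMem_XRA herg hx)) y).const_mul _
  simpa [hdual] using (squeeze_zero hnonneg hle hsum).const_sub 1

lemma regAbs_of_ergodicT (hS : IsLTO S) (herg : ErgodicT S) : RegAbs S := by
  have hlim := hS.tendsto_iterate_ind_XRA herg
  refine ⟨?_, fun x _ => ?_⟩
  · by_contra hempty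
    obtain ⟨y⟩ := ‹Nonempty X›
    have hzero : ∀ n, S^[n] (ind (XRA S)) y = 0 := fun n => by
      rw [Set.not_nonempty_iff_eq_empty.1 hempty, show ind (∅ : Set X) = 0 by funext; simp [ind],
        (hS.iterate n).map_zero, Pi.zero_apply]
    have h10 := tendsto_nhds_unique (hlim y) (by simp only [hzero]; exact tendsto_const_nhds)
    norm_num at h10
  · obtain ⟨N, hN⟩ := eventually_atTop.1 ((hlim x).eventually (lt_mem_nhds one_pos))
    exact ⟨N, hN (N + 1) N.le_succ⟩

lemma minf_add_mul_le_minf_conjOp (hS : IsLTO S) (f : X → ℝ) (z : X) :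
    minf f + minf (conjOp S (ind {z})) * (f z - minf f) ≤ minf (conjOp S f) := by
  have hgap : 0 ≤ f z - minf f := sub_nonneg.2 (minf_le_apply f z)
  have hle : (fun _ => minf f) + (f z - minf f) • ind {z} ≤ f := fun y => by
    by_cases hy : y = z
    · subst hy; simp [ind]
    · simp [ind, hy, minf_le_apply]
  refine le_minf fun y => ?_
  have h := hS.conjOp_mono hle y
  rw [add_comm, hS.conjOp_add_const, hS.conjOp_smul hgap] at h
  simp only [Pi.add_apply, Pi.smul_apply, smul_eq_mul] at h
  nlinarith [minf_le_apply (conjOp S (ind {z})) y]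

lemma conjOp_apply_le_of_le_on (hS : IsLTO S) {f : X → ℝ} {A : Set X} {a b : ℝ} (hab : a ≤ b)
    (hfA : ∀ y ∈ A, f y ≤ a) (hf : ∀ y, f y ≤ b) (x : X) :
    conjOp S f x ≤ b - (b - a) * S (ind A) x := by
  have hle : f ≤ (fun _ => b) - (b - a) • ind A := fun y => by
    by_cases hy : y ∈ A
    · simp [ind, hy, hfA y hy]
    · simp [ind, hy, hf y]
  simpa [hS.conjOp_const_sub_smul b (sub_nonneg.2 hab)] using hS.conjOp_mono hle x

lemma monotone_minf_conjOp_iterate (hS : IsLTO S) (g : X → ℝ) :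
    Monotone fun n => minf ((conjOp S)^[n] g) :=
  monotone_nat_of_le_succ fun n => by
    rw [Function.iterate_succ_apply']
    exact le_minf (hS.minf_le_conjOp _)

lemma antitone_maxf_conjOp_iterate (hS : IsLTO S) (g : X → ℝ) :
    Antitone fun n => maxf ((conjOp S)^[n] g) :=
  antitone_nat_of_succ_le fun n => by
    rw [Function.iterate_succ_apply']
    exact maxf_le (hS.conjOp_le_maxf _)

lemma tendsto_conjOp_iterate_apply_of_mem_XRA (hS : IsLTO S) {g : X → ℝ} {m : ℝ}
    (hm : Tendsto (fun n => minf ((conjOp S)^[n] g)) atTop (𝓝 m)) {z : X} (hz : z ∈ XRA S) :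
    Tendsto (fun n => (conjOp S)^[n] g z) atTop (𝓝 m) := by
  obtain ⟨N, hε⟩ := hz
  set ε := minf ((conjOp S)^[N + 1] (ind {z})) with hεdef
  have hstep : ∀ n, (conjOp S)^[n] g z - minf ((conjOp S)^[n] g)
      ≤ (minf ((conjOp S)^[n + (N + 1)] g) - minf ((conjOp S)^[n] g)) / ε := fun n => by
    have h := (hS.iterate (N + 1)).minf_add_mul_le_minf_conjOp ((conjOp S)^[n] g) z
    rw [← conjOp_iterate, ← Function.iterate_add_apply, Nat.add_comm (N + 1) n, ← hεdef] at h
    rw [le_div_iff₀' hε]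
    linarith
  have hgap : Tendsto (fun n => (conjOp S)^[n] g z - minf ((conjOp S)^[n] g)) atTop (𝓝 0) := by
    refine squeeze_zero (fun n => sub_nonneg.2 (minf_le_apply _ z)) hstep ?_
    simpa using ((hm.comp (tendsto_add_atTop_nat (N + 1))).sub hm).div_const ε
  simpa using hgap.add hm

lemma eventually_conjOp_iterate_apply_lt (hS : IsLTO S) {g : X → ℝ} {m M : ℝ} (hmM : m ≤ M)
    (hm : Tendsto (fun n => minf ((conjOp S)^[n] g)) atTop (𝓝 m))
    (hM : Tendsto (fun n => maxf ((conjOp S)^[n] g)) atTop (𝓝 M)) (p : ℕ) (y : X) {c : ℝ}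
    (hc : M - S^[p] (ind (XRA S)) y * (M - m) < c) :
    ∀ᶠ n in atTop, (conjOp S)^[n] g y < c := by
  obtain ⟨ε, hε, hεc⟩ : ∃ ε > 0, M + ε - S^[p] (ind (XRA S)) y * (M - m) < c :=
    ⟨(c - (M - S^[p] (ind (XRA S)) y * (M - m))) / 2, by linarith, by linarith⟩
  have hA : ∀ᶠ n in atTop, ∀ z ∈ XRA S, (conjOp S)^[n] g z < m + ε := by
    refine eventually_all.2 fun z => ?_
    by_cases hz : z ∈ XRA S
    · filter_upwards [(hS.tendsto_conjOp_iterate_apply_of_mem_XRA hm hz).eventually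
        (gt_mem_nhds (show m < m + ε by linarith))] with n hn _ using hn
    · exact Eventually.of_forall fun n hz' => absurd hz' hz
  have hmax : ∀ᶠ n in atTop, maxf ((conjOp S)^[n] g) < M + ε :=
    hM.eventually (gt_mem_nhds (by linarith))
  have hshift : ∀ᶠ n in atTop, (conjOp S)^[n + p] g y < c := by
    filter_upwards [hA, hmax] with n hnA hnM
    have h := (hS.iterate p).conjOp_apply_le_of_le_on (a := m + ε) (b := M + ε) (by linarith)
      (fun z hz => (hnA z hz).le) (fun z => (le_maxf_apply _ z).trans hnM.le) y
    rw [← conjOp_iterate, ← Function.iterate_add_apply, add_comm] at h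
    linarith
  obtain ⟨N, hN⟩ := eventually_atTop.1 hshift
  refine eventually_atTop.2 ⟨N + p, fun n hn => ?_⟩
  simpa [Nat.sub_add_cancel (le_of_add_le_right hn)] using hN (n - p) (by omega)

lemma ergodicT_of_regAbs (hS : IsLTO S) (hreg : RegAbs S) : ErgodicT S := by
  rw [← ergodicT_conjOp_iff]
  intro g
  set h := fun n => (conjOp S)^[n] g
  have hmono : Monotone fun n => minf (h n) := hS.monotone_minf_conjOp_iterate g
  have hanti : Antitone fun n => maxf (h n) := hS.antitone_maxf_conjOp_iterate g
  have hmin_le_max : ∀ n, minf (h n) ≤ maxf (h n) := fun n => minf_le_maxf (h n)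
  obtain ⟨m, hm⟩ : ∃ m, Tendsto (fun n => minf (h n)) atTop (𝓝 m) :=
    ⟨_, tendsto_atTop_ciSup hmono ⟨maxf (h 0), by
      rintro _ ⟨n, rfl⟩; exact (hmin_le_max n).trans (hanti n.zero_le)⟩⟩
  obtain ⟨M, hM⟩ : ∃ M, Tendsto (fun n => maxf (h n)) atTop (𝓝 M) :=
    ⟨_, tendsto_atTop_ciInf hanti ⟨minf (h 0), by
      rintro _ ⟨n, rfl⟩; exact (hmono n.zero_le).trans (hmin_le_max n)⟩⟩
  have hmM : m ≤ M := le_of_tendsto_of_tendsto' hm hM hmin_le_max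
  have hcoord : ∀ y, ∃ δ > 0, ∀ c, M - δ * (M - m) < c → ∀ᶠ n in atTop, h n y < c := by
    intro y
    by_cases hy : y ∈ XRA S
    · exact ⟨1, one_pos, fun c hc => (hS.tendsto_conjOp_iterate_apply_of_mem_XRA hm hy).eventually
        (gt_mem_nhds (by linarith))⟩
    · obtain ⟨k, hk⟩ := hreg.2 y hy
      exact ⟨_, hk, fun c => hS.eventually_conjOp_iterate_apply_lt hmM hm hM (k + 1) y⟩
  choose δ hδpos hδ using hcoord
  obtain ⟨y, hy⟩ := exists_le_of_le_maxf (fun n => hanti.le_of_tendsto hM n) hδ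
  have hMm : M = m := le_antisymm (by nlinarith [hδpos y]) hmM
  refine ⟨m, tendsto_pi_nhds.2 fun x => ?_⟩
  exact tendsto_of_tendsto_of_tendsto_of_le_of_le hm (hMm ▸ hM)
    (fun n => minf_le_apply _ x) (fun n => le_maxf_apply _ x)

theorem ergodicT_iff_regAbs (hS : IsLTO S) : ErgodicT S ↔ RegAbs S :=
  ⟨hS.regAbs_of_ergodicT, hS.ergodicT_of_regAbs⟩

end IsLTO

namespace IsSol

variable {X : Type*} [Fintype X] [Nonempty X] {Q : (X → ℝ) → (X → ℝ)}
  {T : ℝ → (X → ℝ) → (X → ℝ)}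

lemma ergodicQ_iff_ergodicT (hQ : IsLTRO Q) (hT : IsSol Q T) {t : ℝ} (ht : 0 < t) :
    ErgodicQ T ↔ ErgodicT (T t) := by
  refine forall_congr' fun f => exists_congr fun c => ⟨fun hc => ?_, fun hc => ?_⟩
  · have hnat : Tendsto (fun n : ℕ => (n : ℝ) * t) atTop atTop :=
      tendsto_natCast_atTop_atTop.atTop_mul_const ht
    simpa only [hT.iterate_apply hQ f ht.le, Function.comp_def] using hc.comp hnat
  · rw [Metric.tendsto_atTop] at hc ⊢
    intro ε hε
    obtain ⟨N, hN⟩ := hc ε hε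
    refine ⟨N * t, fun s hs => ?_⟩
    have hS := hT.isLTO hQ (sub_nonneg.2 hs)
    have hsplit : T s f = T (s - N * t) ((T t)^[N] f) := by
      rw [hT.iterate_apply hQ f ht.le, hT.apply_apply hQ f (sub_nonneg.2 hs) (by positivity),
        sub_add_cancel]
    rw [hsplit, ← hS.map_const c]
    exact (hS.dist_le _ _).trans_lt (hN N le_rfl)

end IsSol

/-- For any `t > 0`, `Q` is ergodic iff `T_t` is regularly absorbing. -/
theorem stmt5 {X : Type*} [Fintype X] [Nonempty X]
    (Q : (X → ℝ) → (X → ℝ)) (hQ : IsLTRO Q)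
    (T : ℝ → (X → ℝ) → (X → ℝ)) (hT : IsSol Q T)
    (t : ℝ) (ht : 0 < t) :
    ErgodicQ T ↔ RegAbs (T t) := by
  rw [hT.ergodicQ_iff_ergodicT hQ ht]
  exact (hT.isLTO hQ ht.le).ergodicT_iff_regAbs
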